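/- arXiv:2002.11994 — 2 statements merged into one kernel-verified Lean document; each statement's English description precedes it below -/
import Mathlib

section
/- The relative entropy controls the squared deviation of the diffuse normal from ξ with weight |∇ψ|: ∫_{ℝ^d} |n − ξ|² |∇ψ| dx ≤ 2 E[u|ξ]. -/
/-!
Pointwise, `|n - ξ|² ≤ 2 (1 - n·ξ)` because `|n| = 1 ≥ |ξ|`, and `∇ψ = |∇ψ| n`, so
`|n - ξ|² |∇ψ| ≤ 2 (|∇ψ| - ξ·∇ψ)`. By Young's inequality
`|∇ψ| = √(2W(u)) |∇u| ≤ (ε/2)|∇u|² + ε⁻¹ W(u)`; integrating gives the claim.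
-/

open MeasureTheory Set
open scoped RealInnerProductSpace

noncomputable section

/-- `∇ψ` for `ψ(x) = ∫_0^{u x} √(2 W s) ds`, namely `√(2 W (u x)) ∇u(x)`. -/
def gradPsi {d : ℕ} (W : ℝ → ℝ) (u : EuclideanSpace ℝ (Fin d) → ℝ)
    (x : EuclideanSpace ℝ (Fin d)) : EuclideanSpace ℝ (Fin d) :=
  Real.sqrt (2 * W (u x)) • gradient u x

/-- The relative entropy `E[u|ξ]`. -/
def relEntropy {d : ℕ} (ε : ℝ) (W : ℝ → ℝ) (u : EuclideanSpace ℝ (Fin d) → ℝ)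
    (ξ : EuclideanSpace ℝ (Fin d) → EuclideanSpace ℝ (Fin d)) : ℝ :=
  ∫ x, (ε / 2 * ‖gradient u x‖ ^ 2 + ε⁻¹ * W (u x) - ⟪ξ x, gradPsi W u x⟫)

section InnerProductSpace

variable {E : Type*} [NormedAddCommGroup E] [InnerProductSpace ℝ E]

theorem norm_sub_sq_le_two_mul_one_sub_inner {n ξ : E} (hn : ‖n‖ = 1) (hξ : ‖ξ‖ ≤ 1) :
    ‖n - ξ‖ ^ 2 ≤ 2 * (1 - ⟪n, ξ⟫) := by
  have hξ2 : ‖ξ‖ ^ 2 ≤ 1 := pow_le_one₀ (norm_nonneg ξ) hξ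
  rw [norm_sub_sq_real, hn]
  linarith

theorem norm_sub_sq_mul_norm_le_two_mul_sub_inner {n ξ v : E} (hn : ‖n‖ = 1) (hξ : ‖ξ‖ ≤ 1)
    (hv : v = ‖v‖ • n) : ‖n - ξ‖ ^ 2 * ‖v‖ ≤ 2 * (‖v‖ - ⟪ξ, v⟫) := by
  have hinner : ⟪ξ, v⟫ = ‖v‖ * ⟪n, ξ⟫ := by
    rw [hv, real_inner_smul_right, real_inner_comm, norm_smul, hn, norm_norm, mul_one]
  calc ‖n - ξ‖ ^ 2 * ‖v‖ ≤ 2 * (1 - ⟪n, ξ⟫) * ‖v‖ :=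
        mul_le_mul_of_nonneg_right (norm_sub_sq_le_two_mul_one_sub_inner hn hξ) (norm_nonneg v)
    _ = 2 * (‖v‖ - ⟪ξ, v⟫) := by rw [hinner]; ring

theorem smul_eq_norm_smul_of_normalize {s : ℝ} {G n : E} (hs : 0 ≤ s)
    (hn : G ≠ 0 → n = ‖G‖⁻¹ • G) : s • G = ‖s • G‖ • n := by
  rcases eq_or_ne G 0 with rfl | hG
  · simp
  rw [hn hG, smul_smul, norm_smul, Real.norm_of_nonneg hs, mul_assoc,
    mul_inv_cancel₀ (norm_ne_zero_iff.mpr hG), mul_one]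

end InnerProductSpace

theorem sqrt_two_mul_mul_le {ε w a : ℝ} (hε : 0 < ε) (hw : 0 ≤ w) :
    Real.sqrt (2 * w) * a ≤ ε / 2 * a ^ 2 + ε⁻¹ * w := by
  have hsq : Real.sqrt (2 * w) ^ 2 = 2 * w := Real.sq_sqrt (by positivity)
  have key : 0 ≤ (ε * a - Real.sqrt (2 * w)) ^ 2 / ε := by positivity
  have expand : (ε * a - Real.sqrt (2 * w)) ^ 2 / ε
      = 2 * (ε / 2 * a ^ 2 + ε⁻¹ * w - Real.sqrt (2 * w) * a) := by
    field_simp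
    rw [sub_sq, hsq]
    ring
  linarith

section GradPsi

variable {d : ℕ} {W : ℝ → ℝ} {u : EuclideanSpace ℝ (Fin d) → ℝ}

theorem norm_gradPsi_le (hW : ∀ s, 0 ≤ W s) {ε : ℝ} (hε : 0 < ε) (x : EuclideanSpace ℝ (Fin d)) :
    ‖gradPsi W u x‖ ≤ ε / 2 * ‖gradient u x‖ ^ 2 + ε⁻¹ * W (u x) := by
  rw [gradPsi, norm_smul, Real.norm_of_nonneg (Real.sqrt_nonneg _)]
  exact sqrt_two_mul_mul_le hε (hW _)

theorem norm_sub_sq_mul_norm_gradPsi_le (hW : ∀ s, 0 ≤ W s) {ε : ℝ} (hε : 0 < ε)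
    {n ξ : EuclideanSpace ℝ (Fin d) → EuclideanSpace ℝ (Fin d)} (hn : ∀ x, ‖n x‖ = 1)
    (hn' : ∀ x, gradient u x ≠ 0 → n x = ‖gradient u x‖⁻¹ • gradient u x)
    (hξ : ∀ x, ‖ξ x‖ ≤ 1) (x : EuclideanSpace ℝ (Fin d)) :
    ‖n x - ξ x‖ ^ 2 * ‖gradPsi W u x‖
      ≤ 2 * (ε / 2 * ‖gradient u x‖ ^ 2 + ε⁻¹ * W (u x) - ⟪ξ x, gradPsi W u x⟫) := by
  have hdir : gradPsi W u x = ‖gradPsi W u x‖ • n x :=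
    smul_eq_norm_smul_of_normalize (Real.sqrt_nonneg _) (hn' x)
  have htilt := norm_sub_sq_mul_norm_le_two_mul_sub_inner (hn x) (hξ x) hdir
  linarith [htilt, norm_gradPsi_le (u := u) hW hε x]

end GradPsi

theorem entropy_controls_tilt_general
    (d : ℕ) (ε : ℝ) (hε : 0 < ε)
    (W : ℝ → ℝ) (hWnonneg : ∀ s, 0 ≤ W s)
    (u : EuclideanSpace ℝ (Fin d) → ℝ)
    (henergy : Integrable (fun x => ε / 2 * ‖gradient u x‖ ^ 2 + ε⁻¹ * W (u x)))
    (n : EuclideanSpace ℝ (Fin d) → EuclideanSpace ℝ (Fin d))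
    (hn : ∀ x, ‖n x‖ = 1)
    (hn' : ∀ x, gradient u x ≠ 0 → n x = ‖gradient u x‖⁻¹ • gradient u x)
    (ξ : EuclideanSpace ℝ (Fin d) → EuclideanSpace ℝ (Fin d))
    (hξ : ∀ x, ‖ξ x‖ ≤ 1)
    (hξψ : Integrable (fun x => ⟪ξ x, gradPsi W u x⟫)) :
    (∫ x, ‖n x - ξ x‖ ^ 2 * ‖gradPsi W u x‖) ≤ 2 * relEntropy ε W u ξ := by
  rw [relEntropy, ← integral_const_mul]
  exact integral_mono_of_nonneg (.of_forall fun x => by positivity)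
    ((henergy.sub hξψ).const_mul 2)
    (.of_forall (norm_sub_sq_mul_norm_gradPsi_le hWnonneg hε hn hn' hξ))

/-- The relative entropy controls the squared deviation of the diffuse normal from `ξ`
with weight `|∇ψ|`. -/
theorem entropy_controls_tilt
    (d : ℕ) (hd : 1 ≤ d) (ε : ℝ) (hε : 0 < ε)
    (W : ℝ → ℝ) (hW : Continuous W) (hWnonneg : ∀ s, 0 ≤ W s)
    (u : EuclideanSpace ℝ (Fin d) → ℝ) (hu : ContDiff ℝ 1 u)
    (henergy : Integrable (fun x => ε / 2 * ‖gradient u x‖ ^ 2 + ε⁻¹ * W (u x)))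
    (n : EuclideanSpace ℝ (Fin d) → EuclideanSpace ℝ (Fin d))
    (hn : ∀ x, ‖n x‖ = 1)
    (hn' : ∀ x, gradient u x ≠ 0 → n x = ‖gradient u x‖⁻¹ • gradient u x)
    (ξ : EuclideanSpace ℝ (Fin d) → EuclideanSpace ℝ (Fin d))
    (hξmeas : Measurable ξ) (hξ : ∀ x, ‖ξ x‖ ≤ 1)
    (hξψ : Integrable (fun x => ⟪ξ x, gradPsi W u x⟫)) :
    (∫ x, ‖n x - ξ x‖ ^ 2 * ‖gradPsi W u x‖) ≤ 2 * relEntropy ε W u ξ :=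
  entropy_controls_tilt_general d ε hε W hWnonneg u henergy n hn hn' ξ hξ hξψ
end
end

section
/- Estimate of the quadratic curvature term: there exists a constant C = C(κ, Λ) < ∞ such that 0 ≤ ∫_{ℝ^d} |H|² (ε/2)|∇u|² + (∇·ξ)² ε^{-1} W(u) + (H·n)(∇·ξ) |∇ψ| dx ≤ C E[u|ξ]; here the nonnegativity follows from the pointwise identity that the integrand equals (1/2)|√ε |∇u| H + ε^{-1/2} (∇·ξ) √(2W(u)) n|². -/
open MeasureTheory Set
open scoped RealInnerProductSpace

noncomputable section

/-- The `i`-th standard basis vector of `ℝ^d`. -/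
def eb {d : ℕ} (i : Fin d) : EuclideanSpace ℝ (Fin d) :=
  EuclideanSpace.single i 1

/-- The divergence `∇·F = ∑ i ∂_i F_i`. -/
def divE {d : ℕ} (F : EuclideanSpace ℝ (Fin d) → EuclideanSpace ℝ (Fin d))
    (x : EuclideanSpace ℝ (Fin d)) : ℝ :=
  ∑ i, ⟪fderiv ℝ F x (eb i), eb i⟫

/-!
Write `a = √ε |∇u|`, `c = √(2 W(u)) / √ε` and `s = ξ·n`. Then `|∇ψ| = a c` and `ξ·∇ψ = a c s`
(also where `∇u = 0`, since then `a = 0`), the integrand is `½ |a H + (∇·ξ) c n|²`, and the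
relative entropy density is `a²/2 + c²/2 - a c s = (a - c)²/2 + a c (1 - s)`. Split
`a H + (∇·ξ) c n = a (H - (H·ξ) ξ) + (H·ξ) (a - c) ξ + (∇·ξ + H·ξ) c ξ + (∇·ξ) c (n - ξ)`:
the hypotheses on `H` and `ξ` bound it by `Λ (a m + |a - c| + c m + c |n - ξ|)` with
`m = min (dist(x, I), 1)`, and the squares of these four terms add up to at most `18/κ` times
the entropy density, because `|n - ξ|² ≤ 2 (1 - s)` and `κ m² (a² + c²) ≤ (1 - |ξ|)(a² + c²)`.
With `(x₁ + x₂ + x₃ + x₄)² ≤ 4 ∑ xᵢ²` this gives `C = 36 Λ² / κ`.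
-/

section InnerProductSpace

variable {E : Type*} [NormedAddCommGroup E] [InnerProductSpace ℝ E]

lemma eq_norm_smul_of_ne_zero_imp {g n : E} (hng : g ≠ 0 → n = ‖g‖⁻¹ • g) : g = ‖g‖ • n := by
  rcases eq_or_ne g 0 with rfl | hg
  · simp
  · rw [hng hg, smul_inv_smul₀ (norm_ne_zero_iff.2 hg)]

lemma norm_sub_sq_le_two_sub_two_inner {n ξ : E} (hn : ‖n‖ = 1) (hξ : ‖ξ‖ ≤ 1) :
    ‖n - ξ‖ ^ 2 ≤ 2 - 2 * ⟪ξ, n⟫ := by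
  rw [norm_sub_sq_real, hn, real_inner_comm]
  nlinarith [norm_nonneg ξ]

lemma half_norm_smul_add_smul_sq (a b : ℝ) (H : E) {n : E} (hn : ‖n‖ = 1) :
    1 / 2 * ‖a • H + b • n‖ ^ 2 = a ^ 2 / 2 * ‖H‖ ^ 2 + b ^ 2 / 2 + a * b * ⟪H, n⟫ := by
  rw [norm_add_sq_real, real_inner_smul_left, real_inner_smul_right, norm_smul, norm_smul, hn,
    Real.norm_eq_abs, Real.norm_eq_abs, mul_pow, mul_pow, sq_abs, sq_abs]
  ring

lemma norm_smul_add_smul_le {a c D m Λ : ℝ} {H n ξ : E} (ha : 0 ≤ a) (hc : 0 ≤ c)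
    (hξ : ‖ξ‖ ≤ 1) (hH : ‖H‖ ≤ Λ) (hD : |D| ≤ Λ) (hdiv : |D + ⟪H, ξ⟫| ≤ Λ * m)
    (hperp : ‖H - ⟪H, ξ⟫ • ξ‖ ≤ Λ * m) :
    ‖a • H + (D * c) • n‖ ≤ Λ * (a * m + |a - c| + c * m + c * ‖n - ξ‖) := by
  set t := ⟪H, ξ⟫
  have ht : |t| ≤ Λ :=
    (abs_real_inner_le_norm H ξ).trans ((mul_le_of_le_one_right (norm_nonneg H) hξ).trans hH)
  have hsplit : a • H + (D * c) • n
      = a • (H - t • ξ) + (t * (a - c)) • ξ + ((D + t) * c) • ξ + (D * c) • (n - ξ) := by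
    module
  rw [hsplit]
  refine norm_add₄_le.trans ?_
  simp only [norm_smul, Real.norm_eq_abs, abs_mul, abs_of_nonneg ha, abs_of_nonneg hc]
  have h1 : a * ‖H - t • ξ‖ ≤ Λ * (a * m) := by nlinarith
  have h2 : |t| * |a - c| * ‖ξ‖ ≤ Λ * |a - c| :=
    (mul_le_of_le_one_right (by positivity) hξ).trans (mul_le_mul_of_nonneg_right ht (abs_nonneg _))
  have h3 : |D + t| * c * ‖ξ‖ ≤ Λ * (c * m) := by
    nlinarith [norm_nonneg ξ, mul_nonneg (abs_nonneg (D + t)) hc]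
  have h4 : |D| * c * ‖n - ξ‖ ≤ Λ * (c * ‖n - ξ‖) := by
    nlinarith [mul_nonneg hc (norm_nonneg (n - ξ))]
  linarith

end InnerProductSpace

lemma coercivity_sq_le_entropy {a c s σ N m κ : ℝ} (ha : 0 ≤ a) (hc : 0 ≤ c) (hs : |s| ≤ σ)
    (hσ : σ ≤ 1) (hκ : κ ∈ Ioc 0 1) (hcoer : κ * m ^ 2 ≤ 1 - σ) (hN : N ^ 2 ≤ 2 - 2 * s) :
    κ * (a * m + |a - c| + c * m + c * N) ^ 2 ≤ 72 * (a ^ 2 / 2 + c ^ 2 / 2 - a * c * s) := by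
  set e := a ^ 2 / 2 + c ^ 2 / 2 - a * c * s with he
  obtain ⟨hκ0, hκ1⟩ := hκ
  obtain ⟨hs_lower, hs_upper⟩ := abs_le.1 hs
  have hac := mul_nonneg ha hc
  have hentropy : 2 * e = (a - c) ^ 2 + a * c * (2 - 2 * s) := by rw [he]; ring
  have hdiff : (a - c) ^ 2 ≤ 2 * e := by nlinarith
  have he0 : 0 ≤ e := by nlinarith
  have hmass : κ * m ^ 2 * (a ^ 2 + c ^ 2) ≤ 2 * e := by
    nlinarith [mul_le_mul_of_nonneg_left hs_upper hac, abs_nonneg s, sq_nonneg (a - c),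
      mul_le_mul_of_nonneg_right hcoer (add_nonneg (sq_nonneg a) (sq_nonneg c))]
  have hnormal : a * c * N ^ 2 ≤ 2 * e := by nlinarith [mul_le_mul_of_nonneg_left hN hac]
  have hcN : c ^ 2 * N ^ 2 ≤ 12 * e := by
    have hN4 : N ^ 2 ≤ 4 := by linarith
    nlinarith [mul_le_mul hdiff hN4 (sq_nonneg N) (by linarith),
      mul_nonneg (sq_nonneg a) (sq_nonneg N)]
  have hfour : (a * m + |a - c| + c * m + c * N) ^ 2
      ≤ 4 * ((a * m) ^ 2 + |a - c| ^ 2 + (c * m) ^ 2 + (c * N) ^ 2) := by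
    nlinarith [sq_nonneg (a * m - |a - c|), sq_nonneg (a * m - c * m), sq_nonneg (a * m - c * N),
      sq_nonneg (|a - c| - c * m), sq_nonneg (|a - c| - c * N), sq_nonneg (c * m - c * N)]
  rw [sq_abs, mul_pow, mul_pow, mul_pow] at hfour
  nlinarith [mul_le_mul_of_nonneg_left hfour hκ0.le,
    mul_le_mul_of_nonneg_right hκ1 (sq_nonneg (a - c)),
    mul_le_mul_of_nonneg_right hκ1 (mul_nonneg (sq_nonneg c) (sq_nonneg N))]

section Scaling

variable {ε w : ℝ}

lemma energy_density_eq_scaled (hε : 0 < ε) (hw : 0 ≤ w) (r : ℝ) :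
    ε / 2 * r ^ 2 + ε⁻¹ * w = (√ε * r) ^ 2 / 2 + ((√ε)⁻¹ * √(2 * w)) ^ 2 / 2 := by
  rw [mul_pow, mul_pow, inv_pow, Real.sq_sqrt hε.le, Real.sq_sqrt (by positivity)]
  field_simp

lemma sqrt_two_mul_eq_scaled (hε : 0 < ε) (w r : ℝ) :
    √(2 * w) * r = √ε * r * ((√ε)⁻¹ * √(2 * w)) := by
  field_simp [(Real.sqrt_pos.2 hε).ne']

variable {E : Type*} [NormedAddCommGroup E] [InnerProductSpace ℝ E]

lemma norm_sqrt_smul_le_energy_density (hε : 0 < ε) (hw : 0 ≤ w) (g : E) :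
    ‖√(2 * w) • g‖ ≤ ε / 2 * ‖g‖ ^ 2 + ε⁻¹ * w := by
  rw [norm_smul, Real.norm_of_nonneg (Real.sqrt_nonneg _), sqrt_two_mul_eq_scaled hε,
    energy_density_eq_scaled hε hw]
  nlinarith [sq_nonneg (√ε * ‖g‖ - (√ε)⁻¹ * √(2 * w))]

lemma curvature_density_eq_half_norm_sq (hε : 0 < ε) (hw : 0 ≤ w) (D : ℝ) (g H : E) {n : E}
    (hn : ‖n‖ = 1) :
    ‖H‖ ^ 2 * (ε / 2 * ‖g‖ ^ 2) + D ^ 2 * (ε⁻¹ * w) + ⟪H, n⟫ * D * ‖√(2 * w) • g‖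
      = 1 / 2 * ‖(√ε * ‖g‖) • H + ((√ε)⁻¹ * D * √(2 * w)) • n‖ ^ 2 := by
  rw [half_norm_smul_add_smul_sq _ _ _ hn, norm_smul, Real.norm_of_nonneg (Real.sqrt_nonneg _),
    sqrt_two_mul_eq_scaled hε, mul_pow, Real.sq_sqrt hε.le, mul_pow, mul_pow, inv_pow,
    Real.sq_sqrt hε.le, Real.sq_sqrt (by positivity)]
  ring

lemma curvature_density_le_entropy_density {κ Λ D m : ℝ} {g H n ξ : E} (hκ : κ ∈ Ioc 0 1)
    (hε : 0 < ε) (hw : 0 ≤ w) (hn : ‖n‖ = 1) (hng : g ≠ 0 → n = ‖g‖⁻¹ • g) (hξ : ‖ξ‖ ≤ 1)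
    (hcoer : κ * m ^ 2 ≤ 1 - ‖ξ‖) (hH : ‖H‖ ≤ Λ) (hD : |D| ≤ Λ) (hdiv : |D + ⟪H, ξ⟫| ≤ Λ * m)
    (hperp : ‖H - ⟪H, ξ⟫ • ξ‖ ≤ Λ * m) :
    1 / 2 * ‖(√ε * ‖g‖) • H + ((√ε)⁻¹ * D * √(2 * w)) • n‖ ^ 2
      ≤ 36 * Λ ^ 2 / κ * (ε / 2 * ‖g‖ ^ 2 + ε⁻¹ * w - ⟪ξ, √(2 * w) • g⟫) := by
  set a := √ε * ‖g‖
  set c := (√ε)⁻¹ * √(2 * w)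
  have hψ : √(2 * w) • g = (a * c) • n := by
    rw [← sqrt_two_mul_eq_scaled hε, mul_smul, ← eq_norm_smul_of_ne_zero_imp hng]
  have hcoef : (√ε)⁻¹ * D * √(2 * w) = D * c := by ring
  rw [hψ, real_inner_smul_right, energy_density_eq_scaled hε hw, hcoef]
  have hv := norm_smul_add_smul_le (a := a) (c := c) (n := n) (by positivity) (by positivity)
    hξ hH hD hdiv hperp
  have he := coercivity_sq_le_entropy (a := a) (c := c) (N := ‖n - ξ‖) (by positivity)
    (by positivity)
    ((abs_real_inner_le_norm ξ n).trans_eq (by rw [hn, mul_one])) hξ hκ hcoer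
    (norm_sub_sq_le_two_sub_two_inner hn hξ)
  have hκ0 := hκ.1
  calc 1 / 2 * ‖a • H + (D * c) • n‖ ^ 2
      ≤ 1 / 2 * (Λ * (a * m + |a - c| + c * m + c * ‖n - ξ‖)) ^ 2 := by gcongr
    _ = Λ ^ 2 / (2 * κ) * (κ * (a * m + |a - c| + c * m + c * ‖n - ξ‖) ^ 2) := by
      field_simp
    _ ≤ Λ ^ 2 / (2 * κ) * (72 * (a ^ 2 / 2 + c ^ 2 / 2 - a * c * ⟪ξ, n⟫)) :=
      mul_le_mul_of_nonneg_left he (by positivity)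
    _ = 36 * Λ ^ 2 / κ * (a ^ 2 / 2 + c ^ 2 / 2 - a * c * ⟪ξ, n⟫) := by ring

end Scaling

section EuclideanSpace

variable {d : ℕ} {ε : ℝ} {W : ℝ → ℝ} {u : EuclideanSpace ℝ (Fin d) → ℝ}

lemma continuous_gradPsi (hW : Continuous W) (hu : ContDiff ℝ 1 u) : Continuous (gradPsi W u) :=
  (Real.continuous_sqrt.comp ((continuous_const.mul hW).comp hu.continuous)).smul
    ((InnerProductSpace.toDual ℝ _).symm.continuous.comp (hu.continuous_fderiv one_ne_zero))

lemma integrable_inner_gradPsi {ξ : EuclideanSpace ℝ (Fin d) → EuclideanSpace ℝ (Fin d)}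
    (hε : 0 < ε) (hWc : Continuous W) (hW : ∀ s, 0 ≤ W s) (hu : ContDiff ℝ 1 u)
    (hE : Integrable fun x => ε / 2 * ‖gradient u x‖ ^ 2 + ε⁻¹ * W (u x))
    (hξc : Continuous ξ) (hξ : ∀ x, ‖ξ x‖ ≤ 1) :
    Integrable fun x => ⟪ξ x, gradPsi W u x⟫ :=
  hE.mono (hξc.inner (continuous_gradPsi hWc hu)).aestronglyMeasurable <| ae_of_all _ fun x =>
    (norm_inner_le_norm _ _).trans <| (mul_le_of_le_one_left (norm_nonneg _) (hξ x)).trans <|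
      (norm_sqrt_smul_le_energy_density hε (hW _) _).trans (le_abs_self _)

end EuclideanSpace

lemma sq_min_one_le {t : ℝ} (ht : 0 ≤ t) : min t 1 ^ 2 ≤ min (t ^ 2) 1 :=
  le_min (pow_le_pow_left₀ (le_min ht zero_le_one) (min_le_left _ _) 2)
    (pow_le_one₀ (le_min ht zero_le_one) (min_le_right _ _))

theorem quadratic_curvature_term_estimate_general
    (κ Λ : ℝ) (hκ : κ ∈ Ioc (0:ℝ) 1) :
    ∃ C : ℝ, ∀ d : ℕ, 1 ≤ d → ∀ ε : ℝ, 0 < ε →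
    ∀ W : ℝ → ℝ, Continuous W → (∀ s, 0 ≤ W s) →
    ∀ u : EuclideanSpace ℝ (Fin d) → ℝ, ContDiff ℝ 1 u →
      Integrable (fun x => ε / 2 * ‖gradient u x‖ ^ 2 + ε⁻¹ * W (u x)) →
    ∀ n : EuclideanSpace ℝ (Fin d) → EuclideanSpace ℝ (Fin d),
      (∀ x, ‖n x‖ = 1) →
      (∀ x, gradient u x ≠ 0 → n x = ‖gradient u x‖⁻¹ • gradient u x) →
    ∀ ξ : EuclideanSpace ℝ (Fin d) → EuclideanSpace ℝ (Fin d),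
      ContDiff ℝ 1 ξ → (∀ x, ‖ξ x‖ ≤ 1) →
    ∀ I : Set (EuclideanSpace ℝ (Fin d)), I.Nonempty → IsClosed I →
      (∀ x, κ * min (Metric.infDist x I ^ 2) 1 ≤ 1 - ‖ξ x‖) →
    ∀ H : EuclideanSpace ℝ (Fin d) → EuclideanSpace ℝ (Fin d), Measurable H →
      (∀ x, ‖H x‖ ≤ Λ) → (∀ x, |divE ξ x| ≤ Λ) →
      (∀ x, |divE ξ x + ⟪H x, ξ x⟫| ≤ Λ * min (Metric.infDist x I) 1) →
      (∀ x, ‖H x - ⟪H x, ξ x⟫ • ξ x‖ ≤ Λ * min (Metric.infDist x I) 1) →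
    (∀ x, ‖H x‖ ^ 2 * (ε / 2 * ‖gradient u x‖ ^ 2) + (divE ξ x) ^ 2 * (ε⁻¹ * W (u x))
          + ⟪H x, n x⟫ * divE ξ x * ‖gradPsi W u x‖
        = 1 / 2 * ‖(Real.sqrt ε * ‖gradient u x‖) • H x
            + ((Real.sqrt ε)⁻¹ * divE ξ x * Real.sqrt (2 * W (u x))) • n x‖ ^ 2)
    ∧ 0 ≤ (∫ x, ‖H x‖ ^ 2 * (ε / 2 * ‖gradient u x‖ ^ 2) + (divE ξ x) ^ 2 * (ε⁻¹ * W (u x))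
          + ⟪H x, n x⟫ * divE ξ x * ‖gradPsi W u x‖)
    ∧ (∫ x, ‖H x‖ ^ 2 * (ε / 2 * ‖gradient u x‖ ^ 2) + (divE ξ x) ^ 2 * (ε⁻¹ * W (u x))
          + ⟪H x, n x⟫ * divE ξ x * ‖gradPsi W u x‖)
        ≤ C * relEntropy ε W u ξ := by
  refine ⟨36 * Λ ^ 2 / κ, fun d _ ε hε W hWc hW u hu hE n hn hng ξ hξc hξ I _ _ hcoer H _ hH hD
    hdiv hperp => ?_⟩
  simp only [relEntropy, gradPsi]
  have hid x := curvature_density_eq_half_norm_sq hε (hW (u x)) (divE ξ x) (gradient u x) (H x)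
    (hn x)
  refine ⟨hid, integral_nonneg fun x => by rw [hid x]; positivity, ?_⟩
  rw [← integral_const_mul]
  refine integral_mono_of_nonneg (ae_of_all _ fun x => by dsimp only; rw [hid x]; positivity)
    ((hE.sub (integrable_inner_gradPsi hε hWc hW hu hE hξc.continuous hξ)).const_mul _)
    (ae_of_all _ fun x => ?_)
  have hcoer' : κ * min (Metric.infDist x I) 1 ^ 2 ≤ 1 - ‖ξ x‖ :=
    (mul_le_mul_of_nonneg_left (sq_min_one_le Metric.infDist_nonneg) hκ.1.le).trans (hcoer x)
  dsimp only
  rw [hid x]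
  exact curvature_density_le_entropy_density hκ hε (hW _) (hn x) (hng x) (hξ x) hcoer' (hH x)
    (hD x) (hdiv x) (hperp x)

/-- Estimate of the quadratic curvature term, together with the pointwise identity showing
nonnegativity of the integrand. The constant `C` depends only on `κ` and `Λ`. -/
theorem quadratic_curvature_term_estimate
    (κ Λ : ℝ) (hκ : κ ∈ Ioc (0:ℝ) 1) (hΛ : 0 ≤ Λ) :
    ∃ C : ℝ, ∀ d : ℕ, 1 ≤ d → ∀ ε : ℝ, 0 < ε →
    ∀ W : ℝ → ℝ, Continuous W → (∀ s, 0 ≤ W s) →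
    ∀ u : EuclideanSpace ℝ (Fin d) → ℝ, ContDiff ℝ 1 u →
      Integrable (fun x => ε / 2 * ‖gradient u x‖ ^ 2 + ε⁻¹ * W (u x)) →
    ∀ n : EuclideanSpace ℝ (Fin d) → EuclideanSpace ℝ (Fin d),
      (∀ x, ‖n x‖ = 1) →
      (∀ x, gradient u x ≠ 0 → n x = ‖gradient u x‖⁻¹ • gradient u x) →
    ∀ ξ : EuclideanSpace ℝ (Fin d) → EuclideanSpace ℝ (Fin d),
      ContDiff ℝ 1 ξ → (∀ x, ‖ξ x‖ ≤ 1) →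
    ∀ I : Set (EuclideanSpace ℝ (Fin d)), I.Nonempty → IsClosed I →
      (∀ x, κ * min (Metric.infDist x I ^ 2) 1 ≤ 1 - ‖ξ x‖) →
    ∀ H : EuclideanSpace ℝ (Fin d) → EuclideanSpace ℝ (Fin d), Measurable H →
      (∀ x, ‖H x‖ ≤ Λ) → (∀ x, |divE ξ x| ≤ Λ) →
      (∀ x, |divE ξ x + ⟪H x, ξ x⟫| ≤ Λ * min (Metric.infDist x I) 1) →
      (∀ x, ‖H x - ⟪H x, ξ x⟫ • ξ x‖ ≤ Λ * min (Metric.infDist x I) 1) →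
    (∀ x, ‖H x‖ ^ 2 * (ε / 2 * ‖gradient u x‖ ^ 2) + (divE ξ x) ^ 2 * (ε⁻¹ * W (u x))
          + ⟪H x, n x⟫ * divE ξ x * ‖gradPsi W u x‖
        = 1 / 2 * ‖(Real.sqrt ε * ‖gradient u x‖) • H x
            + ((Real.sqrt ε)⁻¹ * divE ξ x * Real.sqrt (2 * W (u x))) • n x‖ ^ 2)
    ∧ 0 ≤ (∫ x, ‖H x‖ ^ 2 * (ε / 2 * ‖gradient u x‖ ^ 2) + (divE ξ x) ^ 2 * (ε⁻¹ * W (u x))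
          + ⟪H x, n x⟫ * divE ξ x * ‖gradPsi W u x‖)
    ∧ (∫ x, ‖H x‖ ^ 2 * (ε / 2 * ‖gradient u x‖ ^ 2) + (divE ξ x) ^ 2 * (ε⁻¹ * W (u x))
          + ⟪H x, n x⟫ * divE ξ x * ‖gradPsi W u x‖)
        ≤ C * relEntropy ε W u ξ :=
  quadratic_curvature_term_estimate_general κ Λ hκ
end
end
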